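/- Let w : ℤ² → ℝ be nonnegative spatial weights with w(0) = ω₀ > 0, let f : ℤ² → [0, R] be an image with integer values, and let φ, φ̂ : ℤ → ℝ satisfy |φ(t) - φ̂(t)| ≤ ε for all integers t with |t| ≤ R, where 0 ≤ φ ≤ 1, φ(0) = 1, and 0 < ε < ω₀ / (∑_j w(j)). Define BF(i) = (∑_j w(j) φ(f(i-j) - f(i)) f(i-j)) / (∑_j w(j) φ(f(i-j) - f(i))) and similarly B̂F(i) with φ̂ in place of φ, where the sums are over a finite window. Then for every pixel i, |BF(i) - B̂F(i)| ≤ 2 R W ε / (ω₀ - W ε), where W = ∑_j w(j). -/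

import Mathlib

/-!
Both filter outputs are weighted means of the same intensities `x j = f (i - j) ∈ [0, R]`,
with weights `a j = w j φ(·)` and `b j = w j φ̂(·)`. If `c` is the first mean, then
`c - B̂F(i) = ∑ (b j - a j) (c - x j) / ∑ b`, and `|c - x j| ≤ R` because `c` lies in `[0, R]` too.
The weights differ by at most `W ε` in total, the center pixel forces `∑ a ≥ ω₀`, hence
`∑ b ≥ ω₀ - W ε`, and the difference is at most `R W ε / (ω₀ - W ε)`: half the stated bound.
-/

open Finset

section WeightedMean

variable {ι : Type*} (s : Finset ι) {a b x : ι → ℝ}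

theorem Finset.centerMass_real_eq_div (a x : ι → ℝ) :
    s.centerMass a x = (∑ j ∈ s, a j * x j) / ∑ j ∈ s, a j := by
  simp only [centerMass, smul_eq_mul, div_eq_inv_mul]

theorem Finset.centerMass_sub_centerMass_eq (ha : ∑ j ∈ s, a j ≠ 0) (hb : ∑ j ∈ s, b j ≠ 0) :
    s.centerMass a x - s.centerMass b x =
      (∑ j ∈ s, (b j - a j) * (s.centerMass a x - x j)) / ∑ j ∈ s, b j := by
  have hmean : s.centerMass a x * ∑ j ∈ s, a j = ∑ j ∈ s, a j * x j := by
    rw [centerMass_real_eq_div, div_mul_cancel₀ _ ha]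
  have hsum : ∑ j ∈ s, (b j - a j) * (s.centerMass a x - x j) =
      s.centerMass a x * ∑ j ∈ s, b j - ∑ j ∈ s, b j * x j := by
    simp only [sub_mul, mul_sub, sum_sub_distrib, ← sum_mul]
    rw [← hmean]
    ring
  rw [hsum, eq_div_iff hb, centerMass_real_eq_div s b, sub_mul, div_mul_cancel₀ _ hb]

variable {m M : ℝ}

theorem Finset.abs_centerMass_sub_centerMass_le (ha₀ : ∀ j ∈ s, 0 ≤ a j)
    (ha : 0 < ∑ j ∈ s, a j) (hb : 0 < ∑ j ∈ s, b j) (hx : ∀ j ∈ s, x j ∈ Set.Icc m M) :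
    |s.centerMass a x - s.centerMass b x| ≤ (M - m) * (∑ j ∈ s, |a j - b j|) / ∑ j ∈ s, b j := by
  have hc : s.centerMass a x ∈ Set.Icc m M := (convex_Icc m M).centerMass_mem ha₀ ha hx
  rw [centerMass_sub_centerMass_eq s ha.ne' hb.ne', abs_div, abs_of_pos hb, mul_sum]
  gcongr
  refine (abs_sum_le_sum_abs _ _).trans (sum_le_sum fun j hj => ?_)
  rw [abs_mul, abs_sub_comm (b j), mul_comm]
  gcongr
  exact abs_sub_le_of_le_of_le hc.1 hc.2 (hx j hj).1 (hx j hj).2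

theorem Finset.abs_centerMass_sub_centerMass_le_of_sum_abs_sub_le {c δ : ℝ}
    (ha₀ : ∀ j ∈ s, 0 ≤ a j) (hx : ∀ j ∈ s, x j ∈ Set.Icc m M) (hc : c ≤ ∑ j ∈ s, a j)
    (hδ : ∑ j ∈ s, |a j - b j| ≤ δ) (hδc : δ < c) :
    |s.centerMass a x - s.centerMass b x| ≤ (M - m) * δ / (c - δ) := by
  have hδ₀ : 0 ≤ δ := (sum_nonneg fun j _ => abs_nonneg _).trans hδ
  have hb : c - δ ≤ ∑ j ∈ s, b j := by
    have := (le_abs_self _).trans (abs_sum_le_sum_abs (fun j => a j - b j) s)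
    rw [sum_sub_distrib] at this
    linarith
  have ha : 0 < ∑ j ∈ s, a j := by linarith
  have hmM : m ≤ M := Set.nonempty_Icc.1 ⟨_, (convex_Icc m M).centerMass_mem ha₀ ha hx⟩
  refine (abs_centerMass_sub_centerMass_le s ha₀ ha (by linarith) hx).trans ?_
  gcongr

end WeightedMean

theorem Finset.sum_abs_mul_sub_mul_le {ι : Type*} (s : Finset ι) {w u v : ι → ℝ} {ε : ℝ}
    (hw : ∀ j ∈ s, 0 ≤ w j) (huv : ∀ j ∈ s, |u j - v j| ≤ ε) :
    ∑ j ∈ s, |w j * u j - w j * v j| ≤ (∑ j ∈ s, w j) * ε := by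
  rw [sum_mul]
  refine sum_le_sum fun j hj => ?_
  rw [← mul_sub, abs_mul, abs_of_nonneg (hw j hj)]
  exact mul_le_mul_of_nonneg_left (huv j hj) (hw j hj)

theorem stmt_1_general (R : ℕ) (J : Finset (ℤ × ℤ)) (h0J : (0, 0) ∈ J)
    (w : ℤ × ℤ → ℝ) (hw : ∀ j, 0 ≤ w j) (ω₀ : ℝ) (hw0 : w (0, 0) = ω₀) (hω : 0 < ω₀)
    (f : ℤ × ℤ → ℤ) (hf : ∀ i, 0 ≤ f i ∧ f i ≤ (R : ℤ))
    (φ φhat : ℤ → ℝ) (hφ01 : ∀ t, 0 ≤ φ t ∧ φ t ≤ 1) (hφ0 : φ 0 = 1)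
    (ε : ℝ)
    (happrox : ∀ t : ℤ, |t| ≤ (R : ℤ) → |φ t - φhat t| ≤ ε)
    (W : ℝ) (hW : W = ∑ j ∈ J, w j) (hεW : ε < ω₀ / W) :
    ∀ i : ℤ × ℤ,
      |(∑ j ∈ J, w j * φ (f (i - j) - f i) * (f (i - j) : ℝ)) /
            (∑ j ∈ J, w j * φ (f (i - j) - f i)) -
          (∑ j ∈ J, w j * φhat (f (i - j) - f i) * (f (i - j) : ℝ)) /
            (∑ j ∈ J, w j * φhat (f (i - j) - f i))| ≤
        2 * R * W * ε / (ω₀ - W * ε) := by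
  intro i
  have hω_le_W : ω₀ ≤ W := hW ▸ hw0 ▸ single_le_sum (fun j _ => hw j) h0J
  have hWε : W * ε < ω₀ := by
    rwa [lt_div_iff₀ (hω.trans_le hω_le_W), mul_comm] at hεW
  have hcenter : ω₀ ≤ ∑ j ∈ J, w j * φ (f (i - j) - f i) := by
    have := single_le_sum (fun j _ => mul_nonneg (hw j) (hφ01 (f (i - j) - f i)).1) h0J
    rwa [hw0, Prod.mk_zero_zero, sub_zero, sub_self, hφ0, mul_one] at this
  have hx : ∀ j ∈ J, (f (i - j) : ℝ) ∈ Set.Icc 0 (R : ℝ) := fun j _ =>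
    ⟨by exact_mod_cast (hf (i - j)).1, by exact_mod_cast (hf (i - j)).2⟩
  have hkernel : ∑ j ∈ J, |w j * φ (f (i - j) - f i) - w j * φhat (f (i - j) - f i)| ≤ W * ε :=
    hW ▸ sum_abs_mul_sub_mul_le J (fun j _ => hw j) fun j _ => happrox _ <| by
      simpa using abs_sub_le_of_le_of_le (hf (i - j)).1 (hf (i - j)).2 (hf i).1 (hf i).2
  have key := abs_centerMass_sub_centerMass_le_of_sum_abs_sub_le J
    (fun j _ => mul_nonneg (hw j) (hφ01 _).1) hx hcenter hkernel hWε
  simp only [centerMass_real_eq_div, sub_zero] at key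
  have hWε₀ : 0 ≤ W * ε := (sum_nonneg fun _ _ => abs_nonneg _).trans hkernel
  refine key.trans (div_le_div_of_nonneg_right ?_ (sub_pos.2 hWε).le)
  nlinarith [mul_nonneg (Nat.cast_nonneg R) hWε₀]

theorem stmt_1 (R : ℕ) (hR : 0 < R) (J : Finset (ℤ × ℤ)) (h0J : (0, 0) ∈ J)
    (w : ℤ × ℤ → ℝ) (hw : ∀ j, 0 ≤ w j) (ω₀ : ℝ) (hw0 : w (0, 0) = ω₀) (hω : 0 < ω₀)
    (f : ℤ × ℤ → ℤ) (hf : ∀ i, 0 ≤ f i ∧ f i ≤ (R : ℤ))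
    (φ φhat : ℤ → ℝ) (hφ01 : ∀ t, 0 ≤ φ t ∧ φ t ≤ 1) (hφ0 : φ 0 = 1)
    (ε : ℝ) (hε : 0 < ε)
    (happrox : ∀ t : ℤ, |t| ≤ (R : ℤ) → |φ t - φhat t| ≤ ε)
    (W : ℝ) (hW : W = ∑ j ∈ J, w j) (hεW : ε < ω₀ / W) :
    ∀ i : ℤ × ℤ,
      |(∑ j ∈ J, w j * φ (f (i - j) - f i) * (f (i - j) : ℝ)) /
            (∑ j ∈ J, w j * φ (f (i - j) - f i)) -
          (∑ j ∈ J, w j * φhat (f (i - j) - f i) * (f (i - j) : ℝ)) /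
            (∑ j ∈ J, w j * φhat (f (i - j) - f i))| ≤
        2 * R * W * ε / (ω₀ - W * ε) :=
  stmt_1_general R J h0J w hw ω₀ hw0 hω f hf φ φhat hφ01 hφ0 ε happrox W hW hεW
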